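/- Let d be a positive natural number, σ > 0, and for x ∈ ℝ^d let μ_x denote the isotropic Gaussian measure N(x, σ²I_d). Let S ⊆ ℝ^d be a measurable set, x, δ ∈ ℝ^d, and a ∈ ℝ. If μ_x(S) ≥ Φ(a), then μ_{x+δ}(S) ≥ Φ(a − ‖δ‖₂/σ). -/

import Mathlib

open MeasureTheory ProbabilityTheory Set
open scoped RealInnerProductSpace NNReal ENNReal

/-- The isotropic Gaussian measure `N(x, σ²I_d)` on `ℝ^d`. -/
noncomputable def gaussPi (d : ℕ) (σ : ℝ) (x : EuclideanSpace ℝ (Fin d)) :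
    Measure (EuclideanSpace ℝ (Fin d)) :=
  Measure.map (MeasurableEquiv.toLp 2 (Fin d → ℝ))
    (Measure.pi fun i => gaussianReal (x i) ⟨σ ^ 2, sq_nonneg σ⟩)

/-- The standard normal cumulative distribution function `Φ`. -/
noncomputable def stdNormalCDF (t : ℝ) : ℝ :=
  (gaussianReal 0 1 (Set.Iic t)).toReal

/-!
The density of `μ_{x+δ}` with respect to `μ_x` is `exp ((⟪δ, z - x⟫ - ‖δ‖² / 2) / σ²)`, an
increasing function of the statistic `⟪u, z - x⟫` with `u = δ / ‖δ‖`. By the Neyman–Pearson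
lemma, among the sets of `μ_x`-measure at least `Φ(a)` the half-space `{⟪u, z - x⟫ ≤ σ a}` has
the least `μ_{x+δ}`-measure. Since `⟪u, ·⟫` is `N(⟪u, x⟫, σ²)`-distributed under `μ_x`, that
half-space has `μ_x`-measure `Φ(a)` and `μ_{x+δ}`-measure `Φ(a - ‖δ‖ / σ)`.
-/

section NeymanPearson

variable {α : Type*} [MeasurableSpace α] {μ : Measure α} [IsFiniteMeasure μ]

theorem withDensity_apply_le_of_monotone {T : α → ℝ} {g : ℝ → ℝ≥0∞} (hg : Monotone g)
    (hT : Measurable T) {S : Set α} (hS : MeasurableSet S) {c : ℝ}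
    (h : μ {x | T x ≤ c} ≤ μ S) :
    μ.withDensity (g ∘ T) {x | T x ≤ c} ≤ μ.withDensity (g ∘ T) S := by
  set A := {x | T x ≤ c}
  have hA : MeasurableSet A := measurableSet_le hT measurable_const
  have hdiff : μ (A \ S) ≤ μ (S \ A) := by
    rw [← ENNReal.add_le_add_iff_right (measure_ne_top μ (A ∩ S)), measure_sdiff_add_inter A hS,
      inter_comm, measure_sdiff_add_inter S hA]
    exact h
  rw [withDensity_apply _ hA, withDensity_apply _ hS, ← lintegral_inter_add_sdiff _ A hS,
    ← lintegral_inter_add_sdiff _ S hA, inter_comm S A]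
  refine add_le_add le_rfl ?_
  calc ∫⁻ x in A \ S, g (T x) ∂μ ≤ ∫⁻ _ in A \ S, g c ∂μ :=
        setLIntegral_mono measurable_const fun x hx => hg hx.1
    _ = g c * μ (A \ S) := setLIntegral_const _ _
    _ ≤ g c * μ (S \ A) := by gcongr
    _ = ∫⁻ _ in S \ A, g c ∂μ := (setLIntegral_const _ _).symm
    _ ≤ ∫⁻ x in S \ A, g (T x) ∂μ :=
        setLIntegral_mono' (hS.diff hA) fun x hx => hg (le_of_lt (not_le.mp hx.2))

end NeymanPearson

theorem MeasurableEquiv.map_withDensity {α β : Type*} [MeasurableSpace α] [MeasurableSpace β]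
    (e : α ≃ᵐ β) (μ : Measure α) {f : α → ℝ≥0∞} (hf : Measurable f) :
    (μ.withDensity f).map e = (μ.map e).withDensity (f ∘ e.symm) := by
  ext s hs
  rw [e.map_apply, withDensity_apply _ (e.measurable hs), withDensity_apply _ hs,
    setLIntegral_map hs (hf.comp e.symm.measurable) e.measurable]
  simp

theorem Measure.pi_eq_withDensity_prod {ι : Type*} [Fintype ι] {α : ι → Type*}
    [∀ i, MeasurableSpace (α i)] {μ ν : ∀ i, Measure (α i)} [∀ i, IsProbabilityMeasure (μ i)]
    [∀ i, SigmaFinite (ν i)] {f : ∀ i, α i → ℝ≥0∞} (hf : ∀ i, Measurable (f i))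
    (hν : ∀ i, ν i = (μ i).withDensity (f i)) :
    Measure.pi ν = (Measure.pi μ).withDensity fun x => ∏ i, f i (x i) := by
  refine Measure.pi_eq fun s hs => ?_
  rw [withDensity_apply _ (.univ_pi hs), ← lintegral_indicator (.univ_pi hs)]
  have hind : (Set.pi univ s).indicator (fun x => ∏ i, f i (x i))
      = fun x => ∏ i, (s i).indicator (f i) (x i) := by
    ext x
    by_cases hx : x ∈ Set.pi univ s
    · rw [indicator_of_mem hx]
      exact Finset.prod_congr rfl fun i _ => (indicator_of_mem (hx i (mem_univ i)) _).symm
    · obtain ⟨i, -, hi⟩ := not_forall₂.mp hx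
      rw [indicator_of_notMem hx]
      exact (Finset.prod_eq_zero (Finset.mem_univ i) (indicator_of_notMem hi _)).symm
  have hmeas i : Measurable ((s i).indicator (f i)) := (hf i).indicator (hs i)
  rw [hind, lintegral_prod_eq_prod_lintegral_of_indepFun _ _
    (iIndepFun_pi fun i => (hmeas i).aemeasurable) fun i => (hmeas i).comp (measurable_pi_apply i)]
  refine Finset.prod_congr rfl fun i _ => ?_
  rw [(measurePreserving_eval μ i).lintegral_comp (hmeas i), hν i, withDensity_apply _ (hs i),
    lintegral_indicator (hs i)]

theorem gaussianReal_add_eq_withDensity (m c : ℝ) {v : ℝ≥0} (hv : v ≠ 0) :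
    gaussianReal (m + c) v
      = (gaussianReal m v).withDensity
          fun y => ENNReal.ofReal (Real.exp ((c * (y - m) - c ^ 2 / 2) / v)) := by
  rw [gaussianReal_of_var_ne_zero _ hv, gaussianReal_of_var_ne_zero _ hv,
    ← withDensity_mul _ (measurable_gaussianPDF _ _) (by fun_prop)]
  congr 1
  ext y
  simp only [Pi.mul_apply, gaussianPDF, gaussianPDFReal]
  rw [← ENNReal.ofReal_mul (by positivity)]
  congr 1
  rw [mul_assoc _ (Real.exp _), ← Real.exp_add]
  congr 2
  have : (v : ℝ) ≠ 0 := by exact_mod_cast hv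
  field_simp
  ring

theorem pi_gaussianReal_add_eq_withDensity {ι : Type*} [Fintype ι] (m c : ι → ℝ) {v : ℝ≥0}
    (hv : v ≠ 0) :
    Measure.pi (fun i => gaussianReal (m i + c i) v)
      = (Measure.pi fun i => gaussianReal (m i) v).withDensity
      fun y => ENNReal.ofReal (Real.exp ((∑ i, c i * (y i - m i) - (∑ i, c i ^ 2) / 2) / v)) := by
  rw [Measure.pi_eq_withDensity_prod (fun i => by fun_prop)
    fun i => gaussianReal_add_eq_withDensity (m i) (c i) hv]
  congr 1
  ext y
  rw [← ENNReal.ofReal_prod_of_nonneg fun i _ => (Real.exp_pos _).le, ← Real.exp_sum,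
    ← Finset.sum_div, Finset.sum_sub_distrib, ← Finset.sum_div]

section StdGaussian

variable {E : Type*} [NormedAddCommGroup E] [InnerProductSpace ℝ E] [FiniteDimensional ℝ E]
  [MeasurableSpace E] [BorelSpace E]

theorem stdGaussian_map_inner (u : E) :
    (stdGaussian E).map (fun z => ⟪u, z⟫) = gaussianReal 0 (‖u‖₊ ^ 2) := by
  have h := IsGaussian.map_eq_gaussianReal (μ := stdGaussian E) (innerSL ℝ u)
  simp only [integral_strongDual_stdGaussian, variance_dual_stdGaussian, innerSL_apply_norm] at h
  refine h.trans (congrArg _ ?_)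
  rw [← NNReal.coe_inj]
  simp

theorem stdGaussian_inner_le {u : E} (hu : ‖u‖ = 1) (b : ℝ) :
    stdGaussian E {z | ⟪u, z⟫ ≤ b} = ENNReal.ofReal (stdNormalCDF b) := by
  have hu' : ‖u‖₊ = 1 := by ext; exact hu
  rw [stdNormalCDF, ENNReal.ofReal_toReal (measure_ne_top _ _), ← one_pow 2, ← hu',
    ← stdGaussian_map_inner, Measure.map_apply (by fun_prop) measurableSet_Iic]
  rfl

end StdGaussian

theorem gaussPi_eq_map_stdGaussian (d : ℕ) (σ : ℝ) (x : EuclideanSpace ℝ (Fin d)) :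
    gaussPi d σ x = (stdGaussian (EuclideanSpace ℝ (Fin d))).map fun z => x + σ • z := by
  have hcomp : (fun z => x + σ • z) ∘ WithLp.toLp 2
      = WithLp.toLp 2 ∘ fun (y : Fin d → ℝ) i => x i + σ * y i := rfl
  rw [← map_pi_eq_stdGaussian, Measure.map_map (by fun_prop) (by fun_prop), hcomp,
    ← Measure.map_map (by fun_prop) (by fun_prop),
    Measure.pi_map_pi (f := fun i t => x i + σ * t) fun _ => by fun_prop]
  have hmap (m : ℝ) :
      (gaussianReal 0 1).map (fun t => m + σ * t) = gaussianReal m ⟨σ ^ 2, sq_nonneg σ⟩ := by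
    rw [show (fun t => m + σ * t) = (m + ·) ∘ (σ * ·) from rfl,
      ← Measure.map_map (by fun_prop) (by fun_prop), gaussianReal_map_const_mul,
      gaussianReal_map_const_add, mul_zero, zero_add, mul_one]
    rfl
  simp_rw [hmap]
  rfl

instance isProbabilityMeasure_gaussPi (d : ℕ) (σ : ℝ) (x : EuclideanSpace ℝ (Fin d)) :
    IsProbabilityMeasure (gaussPi d σ x) := by
  rw [gaussPi_eq_map_stdGaussian]
  exact Measure.isProbabilityMeasure_map (by fun_prop)

theorem gaussPi_inner_sub_le {d : ℕ} {σ : ℝ} (hσ : 0 < σ) (x y : EuclideanSpace ℝ (Fin d))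
    {u : EuclideanSpace ℝ (Fin d)} (hu : ‖u‖ = 1) (b : ℝ) :
    gaussPi d σ y {z | ⟪u, z - x⟫ ≤ σ * b}
      = ENNReal.ofReal (stdNormalCDF (b - ⟪u, y - x⟫ / σ)) := by
  rw [gaussPi_eq_map_stdGaussian, Measure.map_apply (by fun_prop)
    (measurableSet_le (by fun_prop) measurable_const), ← stdGaussian_inner_le hu]
  congr 1
  ext z
  simp only [mem_preimage, mem_ofPred_eq, add_sub_right_comm, inner_add_right, inner_smul_right]
  rw [le_sub_iff_add_le, ← mul_le_mul_iff_of_pos_left (c := b) hσ, mul_add,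
    mul_div_cancel₀ _ hσ.ne', add_comm]

theorem gaussPi_add_eq_withDensity {d : ℕ} {σ : ℝ} (hσ : σ ≠ 0) (x δ : EuclideanSpace ℝ (Fin d)) :
    gaussPi d σ (x + δ) = (gaussPi d σ x).withDensity
      fun z => ENNReal.ofReal (Real.exp ((⟪δ, z - x⟫ - ‖δ‖ ^ 2 / 2) / σ ^ 2)) := by
  have hv : (⟨σ ^ 2, sq_nonneg σ⟩ : ℝ≥0) ≠ 0 := NNReal.coe_ne_zero.mp (pow_ne_zero 2 hσ)
  rw [gaussPi, gaussPi]
  simp only [PiLp.add_apply]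
  rw [pi_gaussianReal_add_eq_withDensity _ _ hv, MeasurableEquiv.map_withDensity _ _ (by fun_prop)]
  congr 1
  ext z
  simp only [Function.comp_apply, EuclideanSpace.real_norm_sq_eq, PiLp.inner_apply,
    PiLp.sub_apply, Real.inner_apply]
  rfl

theorem gaussian_shift_lower_bound_general
    (d : ℕ) (σ : ℝ) (hσ : 0 < σ)
    (S : Set (EuclideanSpace ℝ (Fin d))) (hS : MeasurableSet S)
    (x δ : EuclideanSpace ℝ (Fin d)) (a : ℝ)
    (h : (gaussPi d σ x S).toReal ≥ stdNormalCDF a) :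
    (gaussPi d σ (x + δ) S).toReal ≥ stdNormalCDF (a - ‖δ‖ / σ) := by
  rcases eq_or_ne δ 0 with rfl | hδ
  · simpa using h
  set t := ‖δ‖
  have ht : 0 < t := norm_pos_iff.mpr hδ
  set u := t⁻¹ • δ
  have hu : ‖u‖ = 1 := by rw [norm_smul, norm_inv, norm_norm, inv_mul_cancel₀ ht.ne']
  have hδu : δ = t • u := by simp [u, smul_smul, ht.ne']
  have huδ : ⟪u, δ⟫ = t := by
    rw [hδu, inner_smul_right, real_inner_self_eq_norm_sq, hu, one_pow, mul_one]
  have hA := gaussPi_inner_sub_le hσ x x hu a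
  have hA' := gaussPi_inner_sub_le hσ x (x + δ) hu a
  rw [sub_self, inner_zero_right, zero_div, sub_zero] at hA
  rw [add_sub_cancel_left, huδ] at hA'
  set g := fun s => ENNReal.ofReal (Real.exp ((t * s - t ^ 2 / 2) / σ ^ 2))
  have hg : Monotone g := fun s s' hss' =>
    ENNReal.ofReal_le_ofReal <| Real.exp_le_exp.mpr <| by gcongr
  have hshift : gaussPi d σ (x + δ) = (gaussPi d σ x).withDensity (g ∘ fun z => ⟪u, z - x⟫) := by
    rw [gaussPi_add_eq_withDensity hσ.ne']
    congr 1
    ext z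
    simp [g, hδu, inner_smul_left, norm_smul, hu, abs_of_pos ht]
  rw [ge_iff_le, ← ENNReal.ofReal_le_iff_le_toReal (measure_ne_top _ _), ← hA', hshift]
  rw [ge_iff_le, ← ENNReal.ofReal_le_iff_le_toReal (measure_ne_top _ _), ← hA] at h
  exact withDensity_apply_le_of_monotone hg (by fun_prop) hS h

theorem gaussian_shift_lower_bound
    (d : ℕ) (hd : 0 < d) (σ : ℝ) (hσ : 0 < σ)
    (S : Set (EuclideanSpace ℝ (Fin d))) (hS : MeasurableSet S)
    (x δ : EuclideanSpace ℝ (Fin d)) (a : ℝ)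
    (h : (gaussPi d σ x S).toReal ≥ stdNormalCDF a) :
    (gaussPi d σ (x + δ) S).toReal ≥ stdNormalCDF (a - ‖δ‖ / σ) :=
  gaussian_shift_lower_bound_general d σ hσ S hS x δ a h
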